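/- arXiv:2404.12471 — 8 statements merged into one kernel-verified Lean document; each statement's English description precedes it below -/
import Mathlib

section
/- If Δ is a d-dimensional simplicial forest, then the number of vertices of Δ is at least the number of facets of dimension d (i.e., f_0 ≥ f_d). -/
open Finset

/-- A facet `F` of the family `𝓖` (of facets of a simplicial complex) is a leaf:
either it is the only facet, or some other facet `G` satisfies
`F' ∩ F ⊆ G ∩ F` for all other facets `F'`. -/
def IsLeaf {V : Type*} [DecidableEq V] (𝓖 : Finset (Finset V)) (F : Finset V) : Prop :=
  F ∈ 𝓖 ∧ ((∀ F' ∈ 𝓖, F' = F) ∨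
    ∃ G ∈ 𝓖, G ≠ F ∧ ∀ F' ∈ 𝓖, F' ≠ F → F' ∩ F ⊆ G ∩ F)

/-- A family of facets is a simplicial forest if every nonempty subfamily has a leaf. -/
def IsForest {V : Type*} [DecidableEq V] (𝓕 : Finset (Finset V)) : Prop :=
  ∀ 𝓖 ⊆ 𝓕, 𝓖.Nonempty → ∃ F, IsLeaf 𝓖 F

lemma aux {V : Type*} [DecidableEq V] (d : ℕ) :
    ∀ n (𝓖 : Finset (Finset V)), 𝓖.card = n → (∀ F ∈ 𝓖, F.card = d + 1) →
    (∀ 𝓗 ⊆ 𝓖, 𝓗.Nonempty → ∃ F, IsLeaf 𝓗 F) →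
    𝓖.card ≤ (𝓖.biUnion id).card := by
  intro n
  induction n using Nat.strong_induction_on with
  | _ n ih =>
    intro 𝓖 hn hcard hforest
    rcases 𝓖.eq_empty_or_nonempty with rfl | hne
    · simp
    obtain ⟨F, hF, hleaf⟩ := hforest 𝓖 (subset_refl _) hne
    have hFne : F.Nonempty := by
      rw [← Finset.card_pos, hcard F hF]; omega
    rcases hleaf with hall | ⟨G, hG, hGF, hjoint⟩
    · have : 𝓖 ⊆ {F} := fun x hx => by simp [hall x hx]
      calc 𝓖.card ≤ 1 := by simpa using card_le_card this
        _ ≤ (𝓖.biUnion id).card := by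
          rw [Nat.one_le_iff_ne_zero, ← Nat.pos_iff_ne_zero, Finset.card_pos]
          exact ⟨hFne.choose, Finset.mem_biUnion.2 ⟨F, hF, hFne.choose_spec⟩⟩
    · -- pick v ∈ F \ G
      have hFG : ¬ F ⊆ G := by
        intro hsub
        exact hGF (Finset.eq_of_subset_of_card_le hsub
          (by rw [hcard G hG, hcard F hF])).symm
      obtain ⟨v, hvF, hvG⟩ := Finset.not_subset.1 hFG
      set 𝓖' := 𝓖.erase F with h𝓖'
      have h'sub : 𝓖' ⊆ 𝓖 := Finset.erase_subset _ _
      have hih : 𝓖'.card ≤ (𝓖'.biUnion id).card := by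
        refine ih 𝓖'.card ?_ 𝓖' rfl (fun F' hF' => hcard F' (h'sub hF'))
          (fun 𝓗 h𝓗 => hforest 𝓗 (h𝓗.trans h'sub))
        rw [← hn]
        exact Finset.card_lt_card (Finset.erase_ssubset hF)
      have hv : v ∉ 𝓖'.biUnion id := by
        simp only [Finset.mem_biUnion, id, not_exists, not_and]
        intro F' hF'
        have hne' : F' ≠ F := Finset.ne_of_mem_erase hF'
        intro hvF'
        exact hvG (Finset.mem_of_mem_inter_left
          (hjoint F' (h'sub hF') hne' (Finset.mem_inter.2 ⟨hvF', hvF⟩)))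
      have hsub2 : insert v (𝓖'.biUnion id) ⊆ 𝓖.biUnion id := by
        apply Finset.insert_subset
        · exact Finset.mem_biUnion.2 ⟨F, hF, hvF⟩
        · exact Finset.biUnion_subset_biUnion_of_subset_left _ h'sub
      calc 𝓖.card = 𝓖'.card + 1 := by
            rw [h𝓖', Finset.card_erase_of_mem hF]
            have := Finset.card_pos.2 hne
            omega
        _ ≤ (𝓖'.biUnion id).card + 1 := by omega
        _ = (insert v (𝓖'.biUnion id)).card := (Finset.card_insert_of_notMem hv).symm
        _ ≤ (𝓖.biUnion id).card := Finset.card_le_card hsub2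

/-- If `Δ` is a `d`-dimensional simplicial forest (given by its family of facets `𝓕`),
then the number of vertices `f₀` is at least the number of `d`-dimensional facets `f_d`. -/
theorem stmt0 {V : Type*} [DecidableEq V] (𝓕 : Finset (Finset V))
    (hforest : IsForest 𝓕)
    (hfacet : ∀ F ∈ 𝓕, ∀ G ∈ 𝓕, F ⊆ G → F = G)
    (d : ℕ) (hdim : ∀ F ∈ 𝓕, F.card ≤ d + 1)
    (hd : ∃ F ∈ 𝓕, F.card = d + 1) :
    (𝓕.filter fun F => F.card = d + 1).card ≤ (𝓕.biUnion id).card := by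

  have h1 := aux d _ (𝓕.filter fun F => F.card = d + 1) rfl
    (fun F hF => (Finset.mem_filter.1 hF).2)
    (fun 𝓗 h𝓗 => hforest 𝓗 (h𝓗.trans (Finset.filter_subset _ _)))
  exact h1.trans (Finset.card_le_card
    (Finset.biUnion_subset_biUnion_of_subset_left _ (Finset.filter_subset _ _)))
end

section
/- Every leaf of a simplicial forest has a free vertex, i.e., a vertex contained in no other facet of the complex. -/
open Finset

/-- Every leaf of a simplicial forest has a free vertex: a vertex of `F`
contained in no other facet of the complex. -/
theorem stmt1 {V : Type*} [DecidableEq V] (𝓕 : Finset (Finset V))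
    (hforest : IsForest 𝓕)
    (hfacet : ∀ F ∈ 𝓕, ∀ G ∈ 𝓕, F ⊆ G → F = G)
    (hne : ∀ F ∈ 𝓕, F.Nonempty)
    (F : Finset V) (hleaf : IsLeaf 𝓕 F) :
    ∃ v ∈ F, ∀ G ∈ 𝓕, v ∈ G → G = F := by
  obtain ⟨hF, honly | ⟨G, hG, hGF, hjoint⟩⟩ := hleaf
  · obtain ⟨v, hv⟩ := hne F hF
    exact ⟨v, hv, fun G hG _ => honly G hG⟩
  · by_contra h
    push_neg at h
    have hsub : F ⊆ G := by
      intro v hv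
      obtain ⟨F', hF', hvF', hF'F⟩ := h v hv
      have := hjoint F' hF' hF'F (mem_inter.mpr ⟨hvF', hv⟩)
      exact (mem_inter.mp this).1
    exact hGF (hfacet F hF G hG hsub).symm
end

section
/- Let Δ be a simplicial forest with s facets. Then the incidence matrix of Δ (rows indexed by facets, columns by vertices, entry 1 if the vertex lies in the facet and 0 otherwise) has some s × s minor equal to 1; in particular, the greatest common divisor of its maximal minors is 1. -/
/-!
A leaf `F` of a family of pairwise incomparable nonempty facets has a private vertex, one lying in
no other facet: if `F` is not alone, a vertex of `F \ G` for the facet `G` that absorbs all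
intersections with `F` will do. Peeling off leaves one at a time ranks the facets so that each
facet's private vertex avoids all later ones. Choosing these vertices as columns, the incidence
minor is unitriangular with respect to that ranking, hence has determinant `1`.
-/

open Finset

theorem Matrix.det_eq_prod_diag_of_blockTriangular_injective {ι R β : Type*} [Fintype ι]
    [DecidableEq ι] [CommRing R] [LinearOrder β] {M : Matrix ι ι R} {b : ι → β}
    (hM : M.BlockTriangular b) (hb : Function.Injective b) : M.det = ∏ i, M i i := by
  let := LinearOrder.lift' b hb
  exact Matrix.det_of_isUpperTriangular hM

section Forest

variable {V : Type*} [DecidableEq V]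

theorem IsLeaf.exists_private_vertex {𝓖 : Finset (Finset V)} {F : Finset V} (hF : IsLeaf 𝓖 F)
    (hmax : ∀ G ∈ 𝓖, F ⊆ G → F = G) (hne : F.Nonempty) :
    ∃ v ∈ F, ∀ G ∈ 𝓖, G ≠ F → v ∉ G := by
  obtain ⟨hF, hsingle | ⟨G, hG, hGF, hinter⟩⟩ := hF
  · obtain ⟨v, hv⟩ := hne
    exact ⟨v, hv, fun G hG hGF => absurd (hsingle G hG) hGF⟩
  · obtain ⟨v, hvF, hvG⟩ := not_subset.mp fun h => hGF (hmax G hG h).symm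
    exact ⟨v, hvF, fun G' hG' hG'F hvG' =>
      hvG (mem_inter.mp (hinter G' hG' hG'F (mem_inter.mpr ⟨hvG', hvF⟩))).1⟩

theorem IsForest.exists_private_vertex {𝓕 : Finset (Finset V)} (hforest : IsForest 𝓕)
    (hfacet : ∀ F ∈ 𝓕, ∀ G ∈ 𝓕, F ⊆ G → F = G) (hne : ∀ F ∈ 𝓕, F.Nonempty)
    {𝓖 : Finset (Finset V)} (h𝓖 : 𝓖 ⊆ 𝓕) (h𝓖ne : 𝓖.Nonempty) :
    ∃ F ∈ 𝓖, ∃ v ∈ F, ∀ G ∈ 𝓖, G ≠ F → v ∉ G := by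
  obtain ⟨F, hleaf⟩ := hforest 𝓖 h𝓖 h𝓖ne
  have hF : F ∈ 𝓕 := h𝓖 hleaf.1
  exact ⟨F, hleaf.1, hleaf.exists_private_vertex
    (fun G hG => hfacet F hF G (h𝓖 hG)) (hne F hF)⟩

theorem exists_rank_of_exists_private_vertex (𝓕 : Finset (Finset V))
    (h : ∀ 𝓖 ⊆ 𝓕, 𝓖.Nonempty → ∃ F ∈ 𝓖, ∃ v ∈ F, ∀ G ∈ 𝓖, G ≠ F → v ∉ G) :
    ∃ r : Finset V → ℕ, Set.InjOn r 𝓕 ∧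
      ∀ F ∈ 𝓕, ∃ v ∈ F, ∀ G ∈ 𝓕, r F < r G → v ∉ G := by
  induction 𝓕 using Finset.strongInduction with
  | H 𝓕 ih =>
  rcases 𝓕.eq_empty_or_nonempty with rfl | h𝓕
  · exact ⟨0, by simp, by simp⟩
  obtain ⟨F, hF, vF, hvF, hvFfree⟩ := h 𝓕 Subset.rfl h𝓕
  obtain ⟨r, hr, hfree⟩ := ih (𝓕.erase F) (erase_ssubset hF)
    fun 𝓖 h𝓖 => h 𝓖 (h𝓖.trans (erase_subset F 𝓕))
  refine ⟨fun G => if G = F then 0 else r G + 1, ?_, fun G hG => ?_⟩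
  · intro A hA B hB hAB
    dsimp only at hAB
    split_ifs at hAB with hAF hBF hBF
    · rw [hAF, hBF]
    · have hA' : A ∈ 𝓕.erase F := mem_erase.mpr ⟨hAF, hA⟩
      have hB' : B ∈ 𝓕.erase F := mem_erase.mpr ⟨hBF, hB⟩
      exact hr hA' hB' (by omega)
  by_cases hGF : G = F
  · refine ⟨vF, hGF ▸ hvF, fun G' hG' hlt => hvFfree G' hG' ?_⟩
    rintro rfl
    simp [hGF] at hlt
  obtain ⟨v, hv, hvfree⟩ := hfree G (mem_erase.mpr ⟨hGF, hG⟩)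
  refine ⟨v, hv, fun G' hG' hlt => ?_⟩
  have hG'F : G' ≠ F := by rintro rfl; simp [hGF] at hlt
  simp only [hGF, hG'F, if_false, add_lt_add_iff_right] at hlt
  exact hvfree G' (mem_erase.mpr ⟨hG'F, hG'⟩) hlt

end Forest

theorem stmt2_general {V : Type*} [DecidableEq V]
    (𝓕 : Finset (Finset V)) (hforest : IsForest 𝓕)
    (hfacet : ∀ F ∈ 𝓕, ∀ G ∈ 𝓕, F ⊆ G → F = G)
    (hne : ∀ F ∈ 𝓕, F.Nonempty)
    (M : Finset V → V → ℤ)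
    (hM : ∀ F v, M F v = if v ∈ F then 1 else 0) :
    (∃ φ : {F // F ∈ 𝓕} → V, Function.Injective φ ∧
        Matrix.det (Matrix.of fun i j : {F // F ∈ 𝓕} => M i.1 (φ j)) = 1) ∧
    ∀ c : ℤ, (∀ φ : {F // F ∈ 𝓕} → V, Function.Injective φ →
        c ∣ Matrix.det (Matrix.of fun i j : {F // F ∈ 𝓕} => M i.1 (φ j))) → IsUnit c := by
  obtain ⟨r, hr, hfree⟩ := exists_rank_of_exists_private_vertex 𝓕
    fun _ h𝓖 h𝓖ne => hforest.exists_private_vertex hfacet hne h𝓖 h𝓖ne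
  choose φ hφmem hφfree using fun F : {F // F ∈ 𝓕} => hfree F.1 F.2
  have hrank : Function.Injective fun F : {F // F ∈ 𝓕} => r F.1 :=
    fun A B hAB => Subtype.ext (hr A.2 B.2 hAB)
  have hφ : Function.Injective φ := by
    intro A B hAB
    by_contra hne
    rcases (hrank.ne hne).lt_or_gt with hlt | hlt
    · exact hφfree A B.1 B.2 hlt (hAB ▸ hφmem B)
    · exact hφfree B A.1 A.2 hlt (hAB ▸ hφmem A)
  have hdet : Matrix.det (Matrix.of fun i j : {F // F ∈ 𝓕} => M i.1 (φ j)) = 1 := by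
    rw [Matrix.det_eq_prod_diag_of_blockTriangular_injective (b := fun F => r F.1) _ hrank]
    · exact prod_eq_one fun F _ => by simp [hM, hφmem F]
    · intro i j hlt
      simp [hM, hφfree j i.1 i.2 hlt]
  exact ⟨⟨φ, hφ, hdet⟩, fun c hc => isUnit_of_dvd_one (hdet ▸ hc φ hφ)⟩

/-- The incidence matrix of a simplicial forest with `s` facets has some `s × s` minor
(given by an injective choice of one column per row) equal to `1`; in particular, any
common divisor of all maximal minors is a unit, i.e. the gcd of the maximal minors is `1`. -/
theorem stmt2 {V : Type*} [Fintype V] [DecidableEq V]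
    (𝓕 : Finset (Finset V)) (hforest : IsForest 𝓕)
    (hfacet : ∀ F ∈ 𝓕, ∀ G ∈ 𝓕, F ⊆ G → F = G)
    (hne : ∀ F ∈ 𝓕, F.Nonempty)
    (M : Finset V → V → ℤ)
    (hM : ∀ F v, M F v = if v ∈ F then 1 else 0) :
    (∃ φ : {F // F ∈ 𝓕} → V, Function.Injective φ ∧
        Matrix.det (Matrix.of fun i j : {F // F ∈ 𝓕} => M i.1 (φ j)) = 1) ∧
    ∀ c : ℤ, (∀ φ : {F // F ∈ 𝓕} → V, Function.Injective φ →
        c ∣ Matrix.det (Matrix.of fun i j : {F // F ∈ 𝓕} => M i.1 (φ j))) → IsUnit c :=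
  stmt2_general 𝓕 hforest hfacet hne M hM
end

section
/- Let Δ be a pure d-dimensional simplicial complex and 0 ≤ i < d. Then the (i, d)-incidence complex H_Δ(i, d) of a simplicial forest Δ is itself a simplicial forest. -/
/-
Taking the `(i+1)`-subsets of a facet turns intersections of facets into intersections of
their images, hence preserves the inclusions `F' ∩ F ⊆ G ∩ F` that define a leaf. Every
subfamily of the incidence complex is the image of a subfamily of `Δ`, and since the map is
injective on facets of the common size `d + 1 ≥ i + 1`, a leaf of the latter (with its witness
`G ≠ F`) maps to a leaf of the former.
-/

open Finset

section

variable {V W : Type*} [DecidableEq V] [DecidableEq W]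

theorem Finset.powersetCard_inter (k : ℕ) (A B : Finset V) :
    (A ∩ B).powersetCard k = A.powersetCard k ∩ B.powersetCard k := by
  ext S
  simp only [mem_inter, mem_powersetCard, subset_inter_iff]
  tauto

variable {f : Finset V → Finset W}

theorem monotone_of_map_inter (hf : ∀ A B, f (A ∩ B) = f A ∩ f B) : Monotone f := fun A B hAB =>
  calc f A = f (A ∩ B) := by rw [inter_eq_left.2 hAB]
    _ = f A ∩ f B := hf A B
    _ ⊆ f B := inter_subset_right

theorem IsLeaf.image (hf : ∀ A B, f (A ∩ B) = f A ∩ f B) {𝓖 : Finset (Finset V)}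
    {F : Finset V} (hinj : Set.InjOn f 𝓖) (hleaf : IsLeaf 𝓖 F) : IsLeaf (𝓖.image f) (f F) := by
  obtain ⟨hF, hsingle | ⟨G, hG, hGF, hGsub⟩⟩ := hleaf
  · refine ⟨mem_image_of_mem f hF, Or.inl ?_⟩
    rw [forall_mem_image]
    exact fun F' hF' => congrArg f (hsingle F' hF')
  · refine ⟨mem_image_of_mem f hF, Or.inr ⟨f G, mem_image_of_mem f hG,
      fun h => hGF (hinj hG hF h), ?_⟩⟩
    rw [forall_mem_image]
    intro F' hF' hne
    rw [← hf, ← hf]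
    exact monotone_of_map_inter hf (hGsub F' hF' fun h => hne (h ▸ rfl))

theorem IsForest.image (hf : ∀ A B, f (A ∩ B) = f A ∩ f B) {𝓕 : Finset (Finset V)}
    (hinj : Set.InjOn f 𝓕) (hforest : IsForest 𝓕) : IsForest (𝓕.image f) := by
  intro 𝓖' h𝓖' hne
  obtain ⟨𝓖, h𝓖, rfl⟩ := subset_image_iff.1 h𝓖'
  obtain ⟨F, hF⟩ := hforest 𝓖 h𝓖 (image_nonempty.1 hne)
  exact ⟨f F, hF.image hf (hinj.mono (coe_subset.2 h𝓖))⟩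

end

/-- For a pure `d`-dimensional simplicial forest `Δ` (with facet family `𝓕`, every facet
of cardinality `d + 1`) and `i < d`, the `(i, d)`-incidence complex — whose vertices are the
`i`-faces of `Δ` and whose facets are, for each facet `F` of `Δ`, the set of `(i+1)`-subsets
of `F` — is itself a simplicial forest. -/
theorem stmt7 {V : Type*} [DecidableEq V] {d i : ℕ} (hid : i < d)
    (𝓕 : Finset (Finset V)) (hforest : IsForest 𝓕)
    (hpure : ∀ F ∈ 𝓕, F.card = d + 1) :
    IsForest (𝓕.image fun F => F.powersetCard (i + 1)) :=
  hforest.image (powersetCard_inter (i + 1)) fun A hA B hB =>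
    powersetCard_injOn i.succ_ne_zero (by omega) (hpure A hA) (hpure B hB)
end

section
/- If F₁ is a leaf of a simplicial complex Δ witnessed by a facet G (that is, F₁ ∩ F ⊆ F₁ ∩ G for all facets F ≠ F₁), then for any i, the facet F₁' of the incidence complex H_Δ(i, d) consisting of the i-faces of F₁ satisfies F₁' ∩ F' ⊆ F₁' ∩ G' for all facets F' ≠ F₁' of H_Δ(i, d), where F' (resp. G') denotes the facet of H_Δ(i, d) corresponding to a facet F (resp. G) of Δ. -/
open Finset

/-- If `F₁` is a leaf of a pure `d`-dimensional simplicial complex `Δ` (facet family `𝓕`)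
witnessed by the facet `G`, then in the `(i, d)`-incidence complex (where the facet
corresponding to a facet `F` of `Δ` is the set `F.powersetCard (i+1)` of its `i`-faces),
the facet corresponding to `F₁` satisfies the leaf condition witnessed by the facet
corresponding to `G`. -/
theorem stmt8 {V : Type*} [DecidableEq V] {d i : ℕ}
    (𝓕 : Finset (Finset V)) (hpure : ∀ F ∈ 𝓕, F.card = d + 1)
    (F₁ G : Finset V) (hF₁ : F₁ ∈ 𝓕) (hG : G ∈ 𝓕) (hGF : G ≠ F₁)
    (hleaf : ∀ F ∈ 𝓕, F ≠ F₁ → F₁ ∩ F ⊆ F₁ ∩ G) :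
    ∀ F ∈ 𝓕, F.powersetCard (i + 1) ≠ F₁.powersetCard (i + 1) →
      F₁.powersetCard (i + 1) ∩ F.powersetCard (i + 1) ⊆
        F₁.powersetCard (i + 1) ∩ G.powersetCard (i + 1) := by
  intro F hF hne s hs
  simp only [mem_inter, mem_powersetCard] at hs ⊢
  obtain ⟨⟨hs1, hc⟩, hs2, -⟩ := hs
  have hFne : F ≠ F₁ := fun h => hne (by rw [h])
  have hsub : s ⊆ F₁ ∩ G := (subset_inter hs1 hs2).trans (hleaf F hF hFne)
  exact ⟨⟨hs1, hc⟩, hsub.trans inter_subset_right, hc⟩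
end

section
/- Let Δ be a d-dimensional simplicial complex, i < d, and let Δ^{[i]} be the complex generated by the i-faces of Δ. If {j₁,…,j_{i+2}} is an (i+1)-face of Δ, then the squarefree monomial m = x_{j₁}⋯x_{j_{i+2}} lies in the second symbolic power F(Δ^{[i]})^{(2)} but not in F(Δ^{[i]})². -/
open Finset MvPolynomial

/-!
Each `(i+1)`-subset `σ.erase a` of the face `σ` gives a generator of `I`, so a prime `P ⊇ I`
contains a variable of every such subset, hence two distinct variables of `σ`, and then
`m ∈ P²`. On the other hand `I ⊆ 𝔪^(i+1)` for the ideal `𝔪` of the variables, so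
`I² ⊆ 𝔪^(2i+2)`, which contains no monomial of degree `i + 2 < 2i + 2`.
-/

theorem Ideal.prod_mem_sq_of_prod_erase_mem {ι R : Type*} [CommSemiring R] [DecidableEq ι]
    {P : Ideal R} [P.IsPrime] {f : ι → R} {s : Finset ι} (hs : s.Nonempty)
    (h : ∀ a ∈ s, ∏ l ∈ s.erase a, f l ∈ P) : ∏ l ∈ s, f l ∈ P ^ 2 := by
  obtain ⟨a, ha⟩ := hs
  obtain ⟨b, hb, hbP⟩ := Ideal.IsPrime.prod_mem_iff.1 (h a ha)
  have hbs : b ∈ s := mem_of_mem_erase hb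
  obtain ⟨c, hc, hcP⟩ := Ideal.IsPrime.prod_mem_iff.1 (h b hbs)
  rw [← mul_prod_erase s f hbs, ← mul_prod_erase _ f hc, ← mul_assoc, sq]
  exact Ideal.mul_mem_right _ _ (Ideal.mul_mem_mul hbP hcP)

namespace MvPolynomial

variable {σ R : Type*} [CommSemiring R]

theorem prod_X_eq_monomial (s : Finset σ) :
    ∏ l ∈ s, (X l : MvPolynomial σ R) = monomial (∑ l ∈ s, Finsupp.single l 1) 1 :=
  (monomial_sum_one s _).symm

theorem prod_X_mem_pow_idealOfVars_iff [Nontrivial R] (s : Finset σ) (k : ℕ) :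
    ∏ l ∈ s, (X l : MvPolynomial σ R) ∈ idealOfVars σ R ^ k ↔ k ≤ s.card := by
  rw [prod_X_eq_monomial, monomial_mem_pow_idealOfVars_iff _ _ one_ne_zero, map_sum]
  simp [Finsupp.degree_single]

end MvPolynomial

theorem stmt12_general {n i : ℕ} (hi : 1 ≤ i)
    (Δ : Finset (Finset (Fin n)))
    (hdown : ∀ σ ∈ Δ, ∀ τ ⊆ σ, τ ∈ Δ)
    (σ : Finset (Fin n)) (hσ : σ ∈ Δ) (hcard : σ.card = i + 2)
    (I : Ideal (MvPolynomial (Fin n) ℚ))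
    (hI : I = Ideal.span {p | ∃ τ ∈ Δ, τ.card = i + 1 ∧ p = ∏ l ∈ τ, X l}) :
    (∀ P ∈ I.minimalPrimes, (∏ l ∈ σ, X l) ∈ P ^ 2) ∧
      (∏ l ∈ σ, X l) ∉ I ^ 2 := by
  constructor
  · rintro P ⟨⟨hP, hIP⟩, -⟩
    refine Ideal.prod_mem_sq_of_prod_erase_mem (card_pos.1 (by omega)) fun a ha => hIP ?_
    rw [hI]
    exact Ideal.subset_span ⟨_, hdown σ hσ _ (erase_subset a σ), by simp [ha, hcard], rfl⟩
  · have hI_le : I ≤ idealOfVars (Fin n) ℚ ^ (i + 1) := by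
      rw [hI, Ideal.span_le]
      rintro _ ⟨τ, -, hτ, rfl⟩
      exact (prod_X_mem_pow_idealOfVars_iff τ _).2 hτ.ge
    intro hmem
    have hmem_pow := Ideal.pow_right_mono hI_le 2 hmem
    rw [← pow_mul, prod_X_mem_pow_idealOfVars_iff] at hmem_pow
    omega

/-- Let `Δ` be a `d`-dimensional simplicial complex, `1 ≤ i < d`, and `F(Δ^{[i]})` the
facet ideal of the complex generated by the `i`-faces of `Δ`. If `σ` is an `(i+1)`-face
of `Δ` (so `|σ| = i + 2`), then the squarefree monomial `m = ∏_{l ∈ σ} x_l` lies in the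
second symbolic power of `F(Δ^{[i]})` — i.e. in `P²` for every minimal prime `P` —
but not in `F(Δ^{[i]})²`. -/
theorem stmt12 {n d i : ℕ} (hi : 1 ≤ i) (hid : i < d)
    (Δ : Finset (Finset (Fin n)))
    (hdown : ∀ σ ∈ Δ, ∀ τ ⊆ σ, τ ∈ Δ)
    (hdim : ∀ σ ∈ Δ, σ.card ≤ d + 1)
    (σ : Finset (Fin n)) (hσ : σ ∈ Δ) (hcard : σ.card = i + 2)
    (I : Ideal (MvPolynomial (Fin n) ℚ))
    (hI : I = Ideal.span {p | ∃ τ ∈ Δ, τ.card = i + 1 ∧ p = ∏ l ∈ τ, X l}) :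
    (∀ P ∈ I.minimalPrimes, (∏ l ∈ σ, X l) ∈ P ^ 2) ∧
      (∏ l ∈ σ, X l) ∉ I ^ 2 :=
  stmt12_general hi Δ hdown σ hσ hcard I hI
end

section
/- For I_{n,l} ⊆ K[x₁,…,xₙ] the ideal generated by all squarefree monomials of degree l, one has the primary decomposition I_{n,l} = ⋂ (x_{i₁},…,x_{i_{n−l+1}}) over all (n−l+1)-element subsets {i₁,…,i_{n−l+1}} of [n]. -/
open Finset MvPolynomial

/-! A polynomial lies in a monomial ideal iff each of its monomials does. The monomial `x^m`
lies in `I_{n,l}` iff its support has at least `l` elements, and it lies in the prime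
`(x_i : i ∈ C)` iff its support meets `C`. A set `s ⊆ [n]` meets every `(n − l + 1)`-subset
iff its complement has at most `n − l` elements, i.e. iff `l ≤ #s`. -/

theorem Finset.forall_card_eq_inter_nonempty_iff {σ : Type*} [Fintype σ] [DecidableEq σ]
    (s : Finset σ) (k : ℕ) :
    (∀ C : Finset σ, #C = k → (s ∩ C).Nonempty) ↔ Fintype.card σ < #s + k := by
  constructor
  · intro h
    by_contra! hle
    obtain ⟨C, hC, hCk⟩ : ∃ C ⊆ sᶜ, #C = k :=
      le_card_iff_exists_subset_card.mp (by rw [card_compl]; omega)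
    obtain ⟨i, hi⟩ := h C hCk
    exact (mem_compl.mp (hC (mem_inter.mp hi).2)) (mem_inter.mp hi).1
  · intro h C hCk
    rw [← not_disjoint_iff_nonempty_inter]
    intro hdisj
    have := card_union_of_disjoint hdisj ▸ card_le_univ (s ∪ C)
    omega

namespace MvPolynomial

variable {σ R : Type*}

theorem sum_single_one_le_iff {τ : Finset σ} {m : σ →₀ ℕ} :
    ∑ i ∈ τ, Finsupp.single i 1 ≤ m ↔ τ ⊆ m.support := by
  classical
  simp only [Finsupp.le_def, Finsupp.finsetSum_apply, Finsupp.single_apply, sum_ite_eq',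
    subset_iff, Finsupp.mem_support_iff]
  refine forall_congr' fun i => ?_
  split_ifs with hi <;> simp [hi, Nat.one_le_iff_ne_zero]

variable (σ R) [CommSemiring R]

noncomputable def squarefreeVeronese (l : ℕ) : Ideal (MvPolynomial σ R) :=
  Ideal.span {p | ∃ τ : Finset σ, #τ = l ∧ p = ∏ i ∈ τ, X i}

variable {σ R}

theorem mem_squarefreeVeronese_iff {l : ℕ} {p : MvPolynomial σ R} :
    p ∈ squarefreeVeronese σ R l ↔ ∀ m ∈ p.support, l ≤ #m.support := by
  have hgen : {p : MvPolynomial σ R | ∃ τ : Finset σ, #τ = l ∧ p = ∏ i ∈ τ, X i} =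
      (fun d => monomial d 1) ''
        {d | ∃ τ : Finset σ, #τ = l ∧ d = ∑ i ∈ τ, Finsupp.single i 1} := by
    ext p
    constructor
    · rintro ⟨τ, hτ, rfl⟩
      exact ⟨_, ⟨τ, hτ, rfl⟩, monomial_sum_one τ _⟩
    · rintro ⟨d, ⟨τ, hτ, rfl⟩, rfl⟩
      exact ⟨τ, hτ, monomial_sum_one τ _⟩
  rw [squarefreeVeronese, hgen, mem_ideal_span_monomial_image]
  refine forall₂_congr fun m _ => ?_
  simp only [Set.mem_ofPred_eq, le_card_iff_exists_subset_card]
  constructor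
  · rintro ⟨_, ⟨τ, hτ, rfl⟩, hle⟩
    exact ⟨τ, sum_single_one_le_iff.mp hle, hτ⟩
  · rintro ⟨τ, hτ, hcard⟩
    exact ⟨_, ⟨τ, hcard, rfl⟩, sum_single_one_le_iff.mpr hτ⟩

theorem mem_iInf_span_X_image_powersetCard_iff [Fintype σ] [DecidableEq σ] {k : ℕ}
    {p : MvPolynomial σ R} :
    p ∈ ⨅ C ∈ (univ : Finset σ).powersetCard k,
        Ideal.span ((X · : σ → MvPolynomial σ R) '' C) ↔
      ∀ m ∈ p.support, Fintype.card σ < #m.support + k := by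
  simp only [Ideal.mem_iInf, mem_powersetCard_univ, mem_ideal_span_X_image, SetLike.mem_coe]
  simp only [← forall_card_eq_inter_nonempty_iff, Finset.Nonempty, mem_inter,
    Finsupp.mem_support_iff]
  exact ⟨fun h m hm C hC => (h C hC m hm).imp fun _ => And.symm,
    fun h C hC m hm => (h m hm C hC).imp fun _ => And.symm⟩

end MvPolynomial

theorem stmt15_general (K : Type*) [Field K] (n l : ℕ) (hln : l ≤ n) :
    Ideal.span {p : MvPolynomial (Fin n) K |
        ∃ τ : Finset (Fin n), τ.card = l ∧ p = ∏ i ∈ τ, X i} =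
      ⨅ C ∈ (Finset.univ : Finset (Fin n)).powersetCard (n - l + 1),
        Ideal.span ((fun i => (X i : MvPolynomial (Fin n) K)) '' C) := by
  ext p
  rw [← squarefreeVeronese, mem_squarefreeVeronese_iff, mem_iInf_span_X_image_powersetCard_iff,
    Fintype.card_fin]
  exact forall₂_congr fun m _ => by omega

/-- The squarefree Veronese ideal `I_{n,l}`, generated by all squarefree monomials of
degree `l` in `K[x₁,…,xₙ]`, has the primary decomposition
`I_{n,l} = ⋂ (x_{i₁},…,x_{i_{n−l+1}})` over all `(n−l+1)`-element subsets of `[n]`. -/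
theorem stmt15 (K : Type*) [Field K] (n l : ℕ) (hl : 1 ≤ l) (hln : l ≤ n) :
    Ideal.span {p : MvPolynomial (Fin n) K |
        ∃ τ : Finset (Fin n), τ.card = l ∧ p = ∏ i ∈ τ, X i} =
      ⨅ C ∈ (Finset.univ : Finset (Fin n)).powersetCard (n - l + 1),
        Ideal.span ((fun i => (X i : MvPolynomial (Fin n) K)) '' C) :=
  stmt15_general K n l hln
end

section
/- Let G be a graph on vertex set V(G) = {v₁,…,vₙ} and w(G) its whiskered graph. Then the maximal independent sets of w(G) all have cardinality n; explicitly, the maximal independent sets of w(G) are exactly the sets A ∪ {w_i : v_i ∉ A} for A an independent set of G. In particular the independence complex of w(G) is pure of dimension n − 1 and its facets are in bijection with the independent sets of G. -/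
/-!
A whisker `inr u` has the single neighbour `inl u`, so an independent set `S` of `w(G)` is maximal
exactly when it contains exactly one of `inl u`, `inr u` for every vertex `u`. Then `S` is the
disjoint sum of its trace `A` on `V` (which is independent in `G`) and of `Aᶜ`, and has
`|A| + |Aᶜ| = n` elements; conversely every such disjoint sum is a maximal independent set.
-/

open Finset

namespace Finset

variable {α β : Type*}

lemma image_inl_union_image_inr [DecidableEq (α ⊕ β)] (s : Finset α) (t : Finset β) :
    s.image Sum.inl ∪ t.image Sum.inr = s.disjSum t := by
  ext (a | b) <;> simp

lemma card_disjSum_compl [Fintype α] [DecidableEq α] (s : Finset α) :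
    #(s.disjSum sᶜ) = Fintype.card α := by
  rw [card_disjSum, card_add_card_compl]

end Finset

namespace SimpleGraph

variable {α V : Type*}

lemma isIndepSet_coe_iff (H : SimpleGraph α) (s : Finset α) :
    H.IsIndepSet (s : Set α) ↔ ∀ a ∈ s, ∀ b ∈ s, ¬ H.Adj a b :=
  ⟨fun h _ ha _ hb hab => h ha hb hab.ne hab, fun h a ha b hb _ => h a ha b hb⟩

lemma maximal_isIndepSet_iff_forall_exists_adj [DecidableEq α] {H : SimpleGraph α}
    {S : Finset α} :
    Maximal (fun T : Finset α => H.IsIndepSet (T : Set α)) S ↔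
      H.IsIndepSet (S : Set α) ∧ ∀ x ∉ S, ∃ y ∈ S, H.Adj x y := by
  rw [Finset.maximal_iff_forall_insert fun s t ht hst => ht.mono (coe_subset.2 hst)]
  refine and_congr_right fun hS => forall₂_congr fun x hx => ?_
  rw [coe_insert, isIndepSet_iff, Set.pairwise_insert_of_notMem (mem_coe.not.2 hx)]
  simp [hS, H.adj_comm]

def whiskered (G : SimpleGraph V) : SimpleGraph (V ⊕ V) where
  Adj
    | .inl u, .inl v => G.Adj u v
    | .inl u, .inr v | .inr u, .inl v => u = v
    | .inr _, .inr _ => False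
  symm := ⟨by
    rintro (u | u) (v | v) h
    exacts [h.symm, h.symm, h.symm, h]⟩
  loopless := ⟨by
    rintro (u | u) h
    exacts [G.loopless.irrefl u h, h]⟩

variable {G : SimpleGraph V}

@[simp] lemma whiskered_adj_inl_inl {u v : V} : G.whiskered.Adj (.inl u) (.inl v) ↔ G.Adj u v :=
  .rfl

@[simp] lemma whiskered_adj_inl_inr {u v : V} : G.whiskered.Adj (.inl u) (.inr v) ↔ u = v :=
  .rfl

@[simp] lemma whiskered_adj_inr_inl {u v : V} : G.whiskered.Adj (.inr u) (.inl v) ↔ u = v :=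
  .rfl

@[simp] lemma not_whiskered_adj_inr_inr {u v : V} : ¬ G.whiskered.Adj (.inr u) (.inr v) :=
  id

variable [Fintype V] [DecidableEq V]

lemma isIndepSet_whiskered_disjSum_compl {A : Finset V} :
    G.whiskered.IsIndepSet (A.disjSum Aᶜ : Set (V ⊕ V)) ↔ G.IsIndepSet (A : Set V) := by
  simp only [isIndepSet_coe_iff]
  refine ⟨fun h u hu v hv => h (.inl u) (inl_mem_disjSum.2 hu) (.inl v) (inl_mem_disjSum.2 hv),
    fun h => ?_⟩
  rintro (u | u) hu (v | v) hv <;>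
    simp only [inl_mem_disjSum, inr_mem_disjSum, mem_compl] at hu hv
  · exact h u hu v hv
  · exact fun huv => hv (huv ▸ hu)
  · exact fun huv => hu (huv ▸ hv)
  · exact not_whiskered_adj_inr_inr

lemma exists_whiskered_adj_of_notMem_disjSum_compl {A : Finset V} {x : V ⊕ V}
    (hx : x ∉ A.disjSum Aᶜ) : ∃ y ∈ A.disjSum Aᶜ, G.whiskered.Adj x y := by
  rcases x with u | u
  · exact ⟨.inr u, by simpa using hx, rfl⟩
  · exact ⟨.inl u, by simpa using hx, rfl⟩

lemma toRight_eq_compl_toLeft {S : Finset (V ⊕ V)}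
    (hS : G.whiskered.IsIndepSet (S : Set (V ⊕ V)))
    (hdom : ∀ x ∉ S, ∃ y ∈ S, G.whiskered.Adj x y) : S.toRight = S.toLeftᶜ := by
  ext u
  rw [mem_toRight, mem_compl, mem_toLeft]
  refine ⟨fun hr hl => hS hl hr Sum.inl_ne_inr rfl, fun hl => ?_⟩
  by_contra hr
  obtain ⟨v | v, hv, hadj⟩ := hdom _ hr
  · rw [whiskered_adj_inr_inl] at hadj
    exact hl (hadj ▸ hv)
  · exact not_whiskered_adj_inr_inr hadj

theorem maximal_isIndepSet_whiskered_iff {S : Finset (V ⊕ V)} :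
    Maximal (fun T : Finset (V ⊕ V) => G.whiskered.IsIndepSet (T : Set (V ⊕ V))) S ↔
      ∃ A : Finset V, G.IsIndepSet (A : Set V) ∧ S = A.disjSum Aᶜ := by
  rw [maximal_isIndepSet_iff_forall_exists_adj]
  constructor
  · rintro ⟨hS, hdom⟩
    have hSA : S = S.toLeft.disjSum S.toLeftᶜ :=
      eq_disjSum_iff.2 ⟨rfl, toRight_eq_compl_toLeft hS hdom⟩
    exact ⟨S.toLeft, isIndepSet_whiskered_disjSum_compl.1 (hSA ▸ hS), hSA⟩
  · rintro ⟨A, hA, rfl⟩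
    exact ⟨isIndepSet_whiskered_disjSum_compl.2 hA,
      fun _ hx => exists_whiskered_adj_of_notMem_disjSum_compl hx⟩

end SimpleGraph

open SimpleGraph

/-- Let `G` be a graph on vertex set `V = {v₁,…,vₙ}` and `w(G)` its whiskered graph,
with vertices `V ⊕ V` (left = original vertices, right = whiskers), where `inl u ~ inl v`
iff `G.Adj u v` and `inl u ~ inr u`. A set `S` is a maximal independent set of `w(G)`
iff `S = A.image inl ∪ Aᶜ.image inr` for an independent set `A` of `G`, and then
`|S| = n`; in particular the independence complex of `w(G)` is pure of dimension `n − 1`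
and its facets are in bijection with the independent sets of `G`. -/
theorem stmt17 {V : Type*} [Fintype V] [DecidableEq V] (n : ℕ)
    (hn : Fintype.card V = n)
    (G : SimpleGraph V) (W : SimpleGraph (V ⊕ V))
    (hW : ∀ x y, W.Adj x y ↔
      ((∃ u v, x = Sum.inl u ∧ y = Sum.inl v ∧ G.Adj u v) ∨
        (∃ u, x = Sum.inl u ∧ y = Sum.inr u) ∨
        (∃ u, x = Sum.inr u ∧ y = Sum.inl u))) :
    ∀ S : Finset (V ⊕ V),
      ((∀ a ∈ S, ∀ b ∈ S, ¬ W.Adj a b) ∧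
          ∀ T : Finset (V ⊕ V), (∀ a ∈ T, ∀ b ∈ T, ¬ W.Adj a b) → S ⊆ T → T = S) ↔
        ((∃ A : Finset V, (∀ u ∈ A, ∀ v ∈ A, ¬ G.Adj u v) ∧
            S = A.image Sum.inl ∪ Aᶜ.image Sum.inr) ∧ S.card = n) := by
  have hWG : W = G.whiskered := by
    ext x y
    rw [hW]
    rcases x with u | u <;> rcases y with v | v <;> simp [eq_comm]
  subst hWG hn
  intro S
  have hmax := maximal_isIndepSet_whiskered_iff (G := G) (S := S)
  simp only [maximal_iff, isIndepSet_coe_iff, image_inl_union_image_inr] at hmax ⊢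
  constructor
  · rintro ⟨hS, hSmax⟩
    obtain ⟨A, hA, rfl⟩ := hmax.1 ⟨hS, fun T hT hST => (hSmax T hT hST).symm⟩
    exact ⟨⟨A, hA, rfl⟩, card_disjSum_compl A⟩
  · rintro ⟨hA, -⟩
    obtain ⟨hS, hSmax⟩ := hmax.2 hA
    exact ⟨hS, fun T hT hST => (hSmax hT hST).symm⟩
end
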